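/- Let (α_t, σ_t) and (ᾱ_s, σ̄_s) be two interpolants, with signal-to-noise ratios ρ(t) = α_t/σ_t and ρ̄(s) = ᾱ_s/σ̄_s, where ρ is strictly monotone and invertible. Define t_s = ρ⁻¹(ρ̄(s)) and c_s = σ̄_s/σ_{t_s}. Then for any x₀, x₁, the paths x̄_s = ᾱ_s x₀ + σ̄_s x₁ and x_t = α_t x₀ + σ_t x₁ satisfy x̄_s = c_s · x_{t_s}. -/

import Mathlib

theorem smul_add_smul_eq_div_smul_of_div_eq_div {K M : Type*} [Field K] [AddCommMonoid M]
    [Module K M] {a b a' b' : K} (hb : b ≠ 0) (hb' : b' ≠ 0) (h : a / b = a' / b') (x y : M) :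
    a' • x + b' • y = (b' / b) • (a • x + b • y) := by
  have ha : b' / b * a = a' := by
    rw [div_mul_eq_mul_div, mul_div_assoc, h, mul_div_cancel₀ a' hb']
  rw [smul_add, smul_smul, smul_smul, ha, div_mul_cancel₀ b' hb]

theorem stmt9_general
    (d : ℕ) (α σ albar sibar : ℝ → ℝ) (ts : ℝ → ℝ) (s : ℝ)
    (hσ : 0 < σ (ts s))
    (hsibar : 0 < sibar s)
    (hsnr : α (ts s) / σ (ts s) = albar s / sibar s)
    (c : ℝ) (hc : c = sibar s / σ (ts s)) :
    ∀ x₀ x₁ : EuclideanSpace ℝ (Fin d),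
      albar s • x₀ + sibar s • x₁ = c • (α (ts s) • x₀ + σ (ts s) • x₁) := by
  subst hc
  exact smul_add_smul_eq_div_smul_of_div_eq_div hσ.ne' hsibar.ne' hsnr

/-- Scale-time transformation between two interpolants: with `t_s = ρ⁻¹(ρ̄(s))`
(i.e. `α_{t_s}/σ_{t_s} = ᾱ_s/σ̄_s`) and `c_s = σ̄_s/σ_{t_s}`, the paths
`x̄_s = ᾱ_s x₀ + σ̄_s x₁` and `x_t = α_t x₀ + σ_t x₁` satisfy `x̄_s = c_s x_{t_s}`. -/
theorem stmt9
    (d : ℕ) (α σ albar sibar : ℝ → ℝ) (ts : ℝ → ℝ) (s : ℝ)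
    (hα : 0 < α (ts s)) (hσ : 0 < σ (ts s))
    (halbar : 0 < albar s) (hsibar : 0 < sibar s)
    (hsnr : α (ts s) / σ (ts s) = albar s / sibar s)
    (c : ℝ) (hc : c = sibar s / σ (ts s)) :
    ∀ x₀ x₁ : EuclideanSpace ℝ (Fin d),
      albar s • x₀ + sibar s • x₁ = c • (α (ts s) • x₀ + σ (ts s) • x₁) :=
  stmt9_general d α σ albar sibar ts s hσ hsibar hsnr c hc
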